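/- arXiv:1809.06814 — 3 statements merged into one kernel-verified Lean document; each statement's English description precedes it below -/
import Mathlib

section
/- Let F be a filter on ω extending the Fréchet filter. Then F is a non-meager P-filter if and only if every F-tree of finite sets has a branch whose union belongs to F. -/
open Set

/-- A point of the Cantor space `α → Bool`, viewed as a subset of `α`
(the identification of `2^ω` with `𝒫(ω)` via characteristic functions). -/
def toSet {α : Type*} (x : α → Bool) : Set α := {a | x a = true}

/-- The copy of a family `F ⊆ 𝒫(α)` inside the Cantor space `α → Bool`. -/
def cantorCopy {α : Type*} (F : Set (Set α)) : Set (α → Bool) := toSet ⁻¹' F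

/-- `F` is a filter on `α`: contains the whole set, not `∅`, closed under
finite intersections and supersets. -/
def IsFilterOn {α : Type*} (F : Set (Set α)) : Prop :=
  Set.univ ∈ F ∧ ∅ ∉ F ∧ (∀ A B : Set α, A ∈ F → B ∈ F → A ∩ B ∈ F) ∧
    ∀ A B : Set α, A ∈ F → A ⊆ B → B ∈ F

/-- `F` extends the Fréchet filter: every cofinite set belongs to `F`. -/
def ExtendsFrechet {α : Type*} (F : Set (Set α)) : Prop :=
  ∀ A : Set α, Aᶜ.Finite → A ∈ F

/-- `F` is a P-filter: every countable subfamily has a pseudo-intersection in `F`. -/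
def IsPFilterOn {α : Type*} (F : Set (Set α)) : Prop :=
  ∀ X : ℕ → Set α, (∀ n, X n ∈ F) → ∃ Y ∈ F, ∀ n, (Y \ X n).Finite

/-- `F` is non-meager as a subset of the Cantor space `α → Bool`. -/
def NonMeagerFamily {α : Type*} (F : Set (Set α)) : Prop :=
  ¬ IsMeagre (cantorCopy F)

/-- `I` is an ideal on `α`: contains `∅`, not the whole set, closed under
finite unions and subsets. -/
def IsIdealOn {α : Type*} (I : Set (Set α)) : Prop :=
  ∅ ∈ I ∧ Set.univ ∉ I ∧ (∀ A B : Set α, A ∈ I → B ∈ I → A ∪ B ∈ I) ∧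
    ∀ A B : Set α, A ∈ I → B ⊆ A → B ∈ I

/-- `I` contains all finite sets. -/
def ContainsFinites {α : Type*} (I : Set (Set α)) : Prop :=
  ∀ A : Set α, A.Finite → A ∈ I

/-- `I` is a P-ideal: every countable subfamily has a member of `I`
almost containing each of them. -/
def IsPIdealOn {α : Type*} (I : Set (Set α)) : Prop :=
  ∀ X : ℕ → Set α, (∀ n, X n ∈ I) → ∃ Y ∈ I, ∀ n, (X n \ Y).Finite

/-- A topological space is countable dense homogeneous. -/
def CDH (X : Type*) [TopologicalSpace X] : Prop :=
  ∀ D E : Set X, D.Countable → Dense D → E.Countable → Dense E →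
    ∃ h : X ≃ₜ X, h '' D = E

/-- `D` is a (set-theoretic) subfamily of `F` that is dense in `F` with respect to
the subspace topology `F` inherits from the Cantor space. -/
def DenseIn {α : Type*} (D F : Set (Set α)) : Prop :=
  D ⊆ F ∧ cantorCopy F ⊆ closure (cantorCopy D)

/-- A tree of finite sequences of finite subsets of `ω`: nonempty (contains the empty
sequence) and closed under initial segments. -/
def IsTree (T : Set (List (Finset ℕ))) : Prop :=
  [] ∈ T ∧ ∀ s ∈ T, ∀ t : List (Finset ℕ), t <+: s → t ∈ T

/-- `T` is an `F`-tree of finite sets: each node has a witness `X ∈ F` all of whose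
finite subsets give immediate successors in `T`. -/
def IsFTree (F : Set (Set ℕ)) (T : Set (List (Finset ℕ))) : Prop :=
  ∀ s ∈ T, ∃ X ∈ F, ∀ a : Finset ℕ, ↑a ⊆ X → s ++ [a] ∈ T

/-!
Both directions rest on Talagrand's description of meagre filters: an upward closed family
`F ⊆ 𝒫(ω)` is meagre iff some interval partition `l` of `ω` has every member of `F` meeting
all but finitely many of its intervals.

Given a non-meagre P-filter and an `F`-tree `T`, a pseudo-intersection `X` of the countably many
witnesses of `T` lies, above some threshold `N s`, inside the witness of the node `s`. Choose
`l` growing so fast that `l (k + 1)` exceeds `N s` for every node `s` built from numbers below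
`l k`, and take `Y ∈ F` missing infinitely many intervals of `l`: the pieces of `X ∩ Y` between
consecutive missed intervals form a branch of `T` with union in `F`.

Conversely, a branch whose `n`-th entry is a subset of `X₀ ∩ ⋯ ∩ Xₙ` has a union that is a
pseudo-intersection of the `Xₙ`. And if `F` were meagre, with partition `l`, consider the tree in
which a node `s` may only be extended by sets lying above the `k`-th interval, `k` exceeding
every number in `s`: each of its branches misses infinitely many intervals, so its union is
not in `F`.
-/

open PiNat TopologicalSpace

section Splice

variable {β : Type*}

def splice (n : ℕ) (σ : Fin n → β) (y : ℕ → β) : ℕ → β :=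
  fun i => if h : i < n then σ ⟨i, h⟩ else y i

theorem splice_splice (n : ℕ) (σ τ : Fin n → β) (y : ℕ → β) :
    splice n σ (splice n τ y) = splice n σ y := by
  ext i; by_cases h : i < n <;> simp [splice, h]

theorem splice_eq_self {n : ℕ} {σ : Fin n → β} {y : ℕ → β}
    (h : ∀ i : Fin n, y i = σ i) : splice n σ y = y := by
  ext i; by_cases hi : i < n
  · simp [splice, hi, h ⟨i, hi⟩]
  · simp [splice, hi]

theorem splice_restrict (n : ℕ) (y : ℕ → β) : splice n (fun i => y i) y = y :=
  splice_eq_self fun _ => rfl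

variable [TopologicalSpace β]

theorem continuous_splice (n : ℕ) (σ : Fin n → β) : Continuous (splice n σ) := by
  refine continuous_pi fun i => ?_
  by_cases h : i < n
  · simp only [splice, h, dite_true]; exact continuous_const
  · simp only [splice, h, dite_false]; exact continuous_apply i

variable [DiscreteTopology β]

theorem dense_preimage_splice {U : Set (ℕ → β)} (hU : Dense U) (n : ℕ) (σ : Fin n → β) :
    Dense (splice n σ ⁻¹' U) := by
  refine (isTopologicalBasis_cylinders _).dense_iff.2 ?_
  rintro _ ⟨z, k, rfl⟩ -
  obtain ⟨u, huz, huU⟩ := hU.inter_open_nonempty _ (isOpen_cylinder _ (splice n σ z) (max k n))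
    ⟨_, self_mem_cylinder _ _⟩
  rw [mem_cylinder_iff] at huz
  have hu : splice n σ u = u := splice_eq_self fun i => by
    have := huz i (lt_max_of_lt_right i.2)
    simpa [splice] using this
  refine ⟨splice n (fun i => z i) u, mem_cylinder_iff.2 fun i hi => ?_, ?_⟩
  · by_cases h : i < n
    · simp [splice, h]
    · simpa [splice, h] using huz i (lt_max_of_lt_left hi)
  · rwa [mem_preimage, splice_splice, hu]

variable [Finite β] [Nonempty β]

theorem exists_forall_eqOn_Ico_mem {U : Set (ℕ → β)} (hU : Dense U) (hUo : IsOpen U) (n : ℕ) :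
    ∃ m, n < m ∧ ∃ t : ℕ → β, ∀ y, (∀ i ∈ Ico n m, y i = t i) → y ∈ U := by
  -- `V` consists of the points that stay in `U` whatever their first `n` values are.
  set V := ⋂ σ : Fin n → β, splice n σ ⁻¹' U
  have hVo : IsOpen V := isOpen_iInter_of_finite fun σ => hUo.preimage (continuous_splice n σ)
  have hVd : Dense V :=
    dense_iInter_of_isOpen (fun σ => hUo.preimage (continuous_splice n σ))
      fun σ => dense_preimage_splice hU n σ
  obtain ⟨t, ht⟩ := hVd.nonempty
  obtain ⟨_, ⟨z, m, rfl⟩, htz, hzV⟩ :=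
    (isTopologicalBasis_cylinders _).exists_subset_of_mem_open ht hVo
  rw [← mem_cylinder_iff_eq.1 htz] at hzV
  refine ⟨max m (n + 1), by omega, t, fun y hy => ?_⟩
  have hy' : splice n (fun i => t i) y ∈ V := hzV <| mem_cylinder_iff.2 fun i hi => by
    by_cases h : i < n
    · simp [splice, h]
    · simpa [splice, h] using hy i ⟨not_lt.1 h, lt_max_of_lt_left hi⟩
  simpa [V, splice_splice, splice_restrict] using mem_iInter.1 hy' fun i => y i

end Splice

theorem IsMeagre.exists_antitone_isOpen_dense {X : Type*} [TopologicalSpace X] [BaireSpace X]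
    {M : Set X} (hM : IsMeagre M) :
    ∃ U : ℕ → Set X, Antitone U ∧ (∀ k, IsOpen (U k)) ∧ (∀ k, Dense (U k)) ∧
      ∀ x ∈ M, ∃ k, x ∉ U k := by
  obtain ⟨t, htM, htG, htd⟩ := mem_residual.1 hM
  obtain ⟨f, hfo, rfl⟩ := isGδ_iff_eq_iInter_nat.1 htG
  refine ⟨fun k => ⋂ j ≤ k, f j,
    fun j k hjk => biInter_subset_biInter_left fun i hi => le_trans hi hjk,
    fun k => (finite_Iic k).isOpen_biInter fun j _ => hfo j,
    fun k => htd.mono (iInter_mono fun j => subset_iInter fun _ => subset_rfl), fun x hx => ?_⟩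
  obtain ⟨k, hk⟩ : ∃ k, x ∉ f k := by
    by_contra! h
    exact htM (mem_iInter.2 h) hx
  exact ⟨k, fun h => hk (mem_iInter₂.1 h k le_rfl)⟩

theorem IsMeagre.exists_blocks {β : Type*} [TopologicalSpace β] [DiscreteTopology β] [Finite β]
    [Nonempty β] {M : Set (ℕ → β)} (hM : IsMeagre M) :
    ∃ (l : ℕ → ℕ) (t : ℕ → ℕ → β), StrictMono l ∧
      ∀ y ∈ M, {k | ∀ i ∈ Ico (l k) (l (k + 1)), y i = t k i}.Finite := by
  obtain ⟨U, hU, hUo, hUd, hMU⟩ := hM.exists_antitone_isOpen_dense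
  choose m hm t ht using fun k n => exists_forall_eqOn_Ico_mem (hUd k) (hUo k) n
  let l : ℕ → ℕ := fun k => Nat.rec 0 (fun k lk => m k lk) k
  refine ⟨l, fun k => t k (l k), strictMono_nat_of_lt_succ fun k => hm k (l k), fun y hy => ?_⟩
  obtain ⟨j, hj⟩ := hMU y hy
  refine (finite_Iio j).subset fun k hk => ?_
  by_contra hjk
  exact hj (hU (not_lt.1 hjk) (ht k (l k) y hk))

def missedBlocks (l : ℕ → ℕ) (X : Set ℕ) : Set ℕ :=
  {k | Disjoint X (Ico (l k) (l (k + 1)))}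

theorem StrictMono.eq_of_mem_Ico {l : ℕ → ℕ} (hl : StrictMono l) {i k k' : ℕ}
    (hk : i ∈ Ico (l k) (l (k + 1))) (hk' : i ∈ Ico (l k') (l (k' + 1))) : k = k' := by
  by_contra hne
  exact disjoint_left.1 (hl.monotone.pairwise_disjoint_on_Ico_succ hne) hk hk'

theorem exists_finite_missedBlocks_of_isMeagre {F : Set (Set ℕ)}
    (hup : ∀ A B : Set ℕ, A ∈ F → A ⊆ B → B ∈ F) (hM : IsMeagre (cantorCopy F)) :
    ∃ l : ℕ → ℕ, StrictMono l ∧ ∀ X ∈ F, (missedBlocks l X).Finite := by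
  classical
  obtain ⟨l, t, hl, hfin⟩ := hM.exists_blocks
  refine ⟨l, hl, fun X hX => ?_⟩
  -- `Y ⊇ X` lies in `F` and agrees with the pattern `t k` on every block `k` missed by `X`.
  set Y := X ∪ {i | ∃ k ∈ missedBlocks l X, i ∈ Ico (l k) (l (k + 1)) ∧ t k i = true}
  have hY : (fun i => decide (i ∈ Y)) ∈ cantorCopy F :=
    hup X _ hX (fun i hi => by simp [toSet, Y, hi])
  refine (hfin _ hY).subset fun k hk i hi => ?_
  have hiX : i ∉ X := disjoint_right.1 hk hi
  have : i ∈ Y ↔ t k i = true := by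
    simp only [Y, mem_union, hiX, false_or]
    exact ⟨fun ⟨k', _, hik', htk'⟩ => hl.eq_of_mem_Ico hi hik' ▸ htk', fun h => ⟨k, hk, hi, h⟩⟩
  exact Bool.eq_iff_iff.2 (decide_eq_true_iff.trans this)

theorem isMeagre_setOf_finite_missedBlocks {l : ℕ → ℕ} (hl : StrictMono l) :
    IsMeagre {x : ℕ → Bool | (missedBlocks l (toSet x)).Finite} := by
  set A : ℕ → Set (ℕ → Bool) := fun m =>
    {x | ∀ k, m ≤ k → ∃ i ∈ Finset.Ico (l k) (l (k + 1)), x i = true}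
  have hA : ∀ m, IsClosed (A m) := fun m => by
    have : A m = ⋂ k, ⋂ (_ : m ≤ k), ⋃ i ∈ Finset.Ico (l k) (l (k + 1)), {x | x i = true} := by
      ext x; simp [A]
    rw [this]
    exact isClosed_iInter fun k => isClosed_iInter fun _ => isClosed_biUnion_finset fun i _ =>
      isClosed_eq (continuous_apply i) continuous_const
  have hAn : ∀ m, IsNowhereDense (A m) := fun m => by
    rw [(hA m).isNowhereDense_iff, interior_eq_empty_iff_dense_compl]
    refine (isTopologicalBasis_cylinders _).dense_iff.2 ?_
    rintro _ ⟨z, n, rfl⟩ -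
    refine ⟨splice n (fun i => z i) fun _ => false, mem_cylinder_iff.2 fun i hi => by
      simp [splice, hi], fun hw => ?_⟩
    obtain ⟨i, hi, hwi⟩ := hw (max m n) (le_max_left _ _)
    have : n ≤ i := (le_max_right m n).trans (hl.id_le _) |>.trans (Finset.mem_Ico.1 hi).1
    simp [splice, not_lt.2 this] at hwi
  refine (isMeagre_iUnion fun m => (hAn m).isMeagre).mono fun x hx => ?_
  obtain ⟨m, hm⟩ := hx.bddAbove
  refine mem_iUnion.2 ⟨m + 1, fun k hk => ?_⟩
  have : ¬ Disjoint (toSet x) (Ico (l k) (l (k + 1))) := fun h => by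
    have := hm h; omega
  obtain ⟨i, hix, hi⟩ := not_disjoint_iff.1 this
  exact ⟨i, Finset.mem_Ico.2 hi, hix⟩

section Trees

variable {α : Type*}

def initSeg (b : ℕ → α) (n : ℕ) : List α := List.ofFn fun i : Fin n => b i

theorem initSeg_succ (b : ℕ → α) (n : ℕ) : initSeg b (n + 1) = initSeg b n ++ [b n] := by
  simp only [initSeg, List.ofFn_succ_last, Fin.val_castSucc, Fin.val_last]

@[simp]
theorem length_initSeg (b : ℕ → α) (n : ℕ) : (initSeg b n).length = n := by
  simp [initSeg]

theorem mem_initSeg {b : ℕ → α} {n : ℕ} {a : α} : a ∈ initSeg b n ↔ ∃ j < n, b j = a := by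
  simp [initSeg, List.mem_ofFn, Fin.exists_iff]

def succTree (R : List α → α → Prop) : Set (List α) := {s | ∀ t a, t ++ [a] <+: s → R t a}

theorem append_singleton_mem_succTree {R : List α → α → Prop} {s : List α} {a : α}
    (hs : s ∈ succTree R) (ha : R s a) : s ++ [a] ∈ succTree R := by
  intro t b htb
  rcases List.prefix_concat_iff.1 htb with h | h
  · obtain ⟨rfl, rfl⟩ := List.append_singleton_inj.1 h
    exact ha
  · exact hs t b h

theorem succTree_rel_initSeg {R : List α → α → Prop} {b : ℕ → α}
    (hb : ∀ n, initSeg b n ∈ succTree R) (n : ℕ) : R (initSeg b n) (b n) :=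
  hb (n + 1) _ _ (initSeg_succ b n ▸ List.prefix_refl _)

theorem isTree_succTree (R : List (Finset ℕ) → Finset ℕ → Prop) : IsTree (succTree R) :=
  ⟨fun t a h => by simpa using h.length_le,
    fun _ hs _ hts u a hu => hs u a (hu.trans hts)⟩

theorem isFTree_succTree {F : Set (Set ℕ)} {R : List (Finset ℕ) → Finset ℕ → Prop}
    (hR : ∀ s, ∃ X ∈ F, ∀ a : Finset ℕ, ↑a ⊆ X → R s a) : IsFTree F (succTree R) := by
  intro s hs
  obtain ⟨X, hXF, hX⟩ := hR s
  exact ⟨X, hXF, fun a ha => append_singleton_mem_succTree hs (hX a ha)⟩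

end Trees

def IsFilterOn.toFilter {α : Type*} {F : Set (Set α)} (hF : IsFilterOn F) : Filter α where
  sets := F
  univ_sets := hF.1
  sets_of_superset := hF.2.2.2 _ _
  inter_sets := hF.2.2.1 _ _

def HasFBranch (F : Set (Set ℕ)) (T : Set (List (Finset ℕ))) : Prop :=
  ∃ b : ℕ → Finset ℕ, (∀ n, initSeg b n ∈ T) ∧ (⋃ n, (b n : Set ℕ)) ∈ F

theorem isPFilterOn_of_forall_hasFBranch {F : Set (Set ℕ)} (hF : IsFilterOn F)
    (htree : ∀ T, IsTree T → IsFTree F T → HasFBranch F T) : IsPFilterOn F := by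
  intro X hX
  set R : List (Finset ℕ) → Finset ℕ → Prop := fun s a => ↑a ⊆ ⋂ i ≤ s.length, X i
  have hR : ∀ s, ∃ Z ∈ F, ∀ a : Finset ℕ, ↑a ⊆ Z → R s a := fun s =>
    ⟨_, (Filter.biInter_mem (f := hF.toFilter) (finite_Iic _)).2 fun i _ => hX i, fun _ => id⟩
  obtain ⟨b, hb, hbF⟩ := htree _ (isTree_succTree R) (isFTree_succTree hR)
  refine ⟨_, hbF, fun n => ((finite_Iio n).biUnion fun j _ => (b j).finite_toSet).subset ?_⟩
  rintro x ⟨hxb, hxn⟩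
  obtain ⟨j, hxj⟩ := mem_iUnion.1 hxb
  refine mem_biUnion (mem_Iio.2 <| not_le.1 fun hnj => hxn ?_) hxj
  have hxX := succTree_rel_initSeg hb j hxj
  simp only [length_initSeg, mem_iInter] at hxX
  exact hxX n hnj

def listBound (s : List (Finset ℕ)) : ℕ := (s.map fun a => a.sup id + 1).sum

theorem lt_listBound {s : List (Finset ℕ)} {a : Finset ℕ} {x : ℕ} (ha : a ∈ s) (hx : x ∈ a) :
    x < listBound s :=
  (Nat.lt_succ_of_le (Finset.le_sup (f := id) hx)).trans_le
    (List.le_sum_of_mem (List.mem_map_of_mem ha))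

theorem listBound_append_singleton (s : List (Finset ℕ)) (a : Finset ℕ) :
    listBound (s ++ [a]) = listBound s + (a.sup id + 1) := by
  simp [listBound]

theorem exists_isFTree_infinite_missedBlocks {F : Set (Set ℕ)} (hFr : ExtendsFrechet F)
    {l : ℕ → ℕ} (hl : StrictMono l) :
    ∃ T, IsTree T ∧ IsFTree F T ∧
      ∀ b : ℕ → Finset ℕ, (∀ n, initSeg b n ∈ T) →
        (missedBlocks l (⋃ n, (b n : Set ℕ))).Infinite := by
  set R : List (Finset ℕ) → Finset ℕ → Prop := fun s a => ∀ x ∈ a, l (listBound s + 1) ≤ x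
  have hR : ∀ s, ∃ X ∈ F, ∀ a : Finset ℕ, ↑a ⊆ X → R s a := fun s =>
    ⟨Ici (l (listBound s + 1)), hFr _ (by simp), fun _ ha x hx => ha hx⟩
  refine ⟨succTree R, isTree_succTree R, isFTree_succTree hR, fun b hb => ?_⟩
  -- The branch misses the block indexed by the bound of each of its initial segments.
  set k : ℕ → ℕ := fun n => listBound (initSeg b n)
  have hk : StrictMono k := strictMono_nat_of_lt_succ fun n => by
    simp only [k, initSeg_succ, listBound_append_singleton]; omega
  refine infinite_of_injective_forall_mem hk.injective fun n => ?_
  refine disjoint_left.2 fun x hxb hx => ?_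
  obtain ⟨j, hxj⟩ := mem_iUnion.1 hxb
  rcases lt_or_ge j n with hjn | hnj
  · have : x < k n := lt_listBound (mem_initSeg.2 ⟨j, hjn, rfl⟩) hxj
    exact absurd hx.1 (not_le.2 (this.trans_le (hl.id_le _)))
  · have : l (k n + 1) ≤ x :=
      (hl.monotone (Nat.succ_le_succ (hk.monotone hnj))).trans (succTree_rel_initSeg hb j x hxj)
    exact absurd hx.2 (not_lt.2 this)

theorem nonMeagerFamily_of_forall_hasFBranch {F : Set (Set ℕ)} (hF : IsFilterOn F)
    (hFr : ExtendsFrechet F) (htree : ∀ T, IsTree T → IsFTree F T → HasFBranch F T) :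
    NonMeagerFamily F := by
  intro hM
  obtain ⟨l, hl, hfin⟩ := exists_finite_missedBlocks_of_isMeagre hF.2.2.2 hM
  obtain ⟨T, hT, hFT, hinf⟩ := exists_isFTree_infinite_missedBlocks hFr hl
  obtain ⟨b, hb, hbF⟩ := htree T hT hFT
  exact hinf b hb (hfin _ hbF)

theorem IsPFilterOn.exists_forall_finite_diff {α ι : Type*} [Countable ι] [Nonempty ι]
    {F : Set (Set α)} (hP : IsPFilterOn F) {W : ι → Set α} (hW : ∀ i, W i ∈ F) :
    ∃ X ∈ F, ∀ i, (X \ W i).Finite := by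
  obtain ⟨e, he⟩ := exists_surjective_nat ι
  obtain ⟨X, hXF, hX⟩ := hP (W ∘ e) fun n => hW (e n)
  exact ⟨X, hXF, he.forall.2 hX⟩

theorem IsFTree.exists_threshold {F : Set (Set ℕ)} {T : Set (List (Finset ℕ))}
    (hF : IsFilterOn F) (hP : IsPFilterOn F) (hFT : IsFTree F T) :
    ∃ X ∈ F, ∃ N : List (Finset ℕ) → ℕ,
      ∀ s ∈ T, ∀ a : Finset ℕ, (∀ x ∈ a, x ∈ X ∧ N s ≤ x) → s ++ [a] ∈ T := by
  have : ∀ s, ∃ W ∈ F, s ∈ T → ∀ a : Finset ℕ, ↑a ⊆ W → s ++ [a] ∈ T := fun s => by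
    by_cases hs : s ∈ T
    · obtain ⟨W, hWF, hW⟩ := hFT s hs
      exact ⟨W, hWF, fun _ => hW⟩
    · exact ⟨univ, hF.1, fun h => absurd h hs⟩
  choose W hWF hW using this
  obtain ⟨X, hXF, hXW⟩ := hP.exists_forall_finite_diff hWF
  choose N hN using fun s => (hXW s).bddAbove
  refine ⟨X, hXF, fun s => N s + 1, fun s hs a ha => hW s hs a fun x hx => ?_⟩
  by_contra hxW
  have := hN s ⟨(ha x hx).1, hxW⟩
  have : N s + 1 ≤ x := (ha x hx).2
  omega

def boundedLists (m : ℕ) : Set (List (Finset ℕ)) :=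
  {s | s.length ≤ m ∧ ∀ a ∈ s, a ⊆ Finset.range m}

theorem finite_boundedLists (m : ℕ) : (boundedLists m).Finite := by
  refine ((List.finite_length_le (Finset.range m).powerset m).image
    (List.map Subtype.val)).subset ?_
  rintro s ⟨hlen, hs⟩
  lift s to List (Finset.range m).powerset using fun a ha => Finset.mem_powerset.2 (hs a ha)
  exact ⟨s, by simpa using hlen, rfl⟩

theorem exists_strictMono_forall_lt {β : Type*} {S : ℕ → Set β} (hS : ∀ m, (S m).Finite)
    (N : β → ℕ) : ∃ l : ℕ → ℕ, StrictMono l ∧ ∀ k, ∀ s ∈ S (l k), N s < l (k + 1) := by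
  let l : ℕ → ℕ := fun k => Nat.rec 0 (fun _ lk => lk + 1 + (hS lk).toFinset.sup N) k
  refine ⟨l, strictMono_nat_of_lt_succ fun k => by simp only [l]; omega, fun k s hs => ?_⟩
  have := Finset.le_sup (f := N) ((hS (l k)).mem_toFinset.2 hs)
  show N s < l k + 1 + _
  omega

theorem exists_branch_of_threshold {T : Set (List (Finset ℕ))} {X Y : Set ℕ}
    {N : List (Finset ℕ) → ℕ} {l : ℕ → ℕ} (hT : [] ∈ T)
    (hext : ∀ s ∈ T, ∀ a : Finset ℕ, (∀ x ∈ a, x ∈ X ∧ N s ≤ x) → s ++ [a] ∈ T)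
    (hl : StrictMono l) (hN : ∀ k, ∀ s ∈ boundedLists (l k), N s < l (k + 1))
    (hY : (missedBlocks l Y).Infinite) :
    ∃ b : ℕ → Finset ℕ, (∀ n, initSeg b n ∈ T) ∧ ∃ m, X ∩ Y ∩ Ici m ⊆ ⋃ n, (b n : Set ℕ) := by
  classical
  set κ := Nat.nth (· ∈ missedBlocks l Y)
  have hκ : StrictMono κ := Nat.nth_strictMono hY
  have hκY : ∀ j, κ j ∈ missedBlocks l Y := Nat.nth_mem_of_infinite hY
  set b : ℕ → Finset ℕ := fun j => {x ∈ Finset.Ico (l (κ j)) (l (κ (j + 1))) | x ∈ X ∩ Y}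
  have hb : ∀ j x, x ∈ b j ↔ x ∈ X ∩ Y ∧ x ∈ Ico (l (κ j)) (l (κ (j + 1))) := by
    simp [b, and_comm]
  have hbounded : ∀ n, initSeg b n ∈ boundedLists (l (κ n)) := fun n =>
    ⟨(length_initSeg b n).trans_le ((hκ.id_le n).trans (hl.id_le _)), fun a ha x hx => by
      obtain ⟨j, hj, rfl⟩ := mem_initSeg.1 ha
      exact Finset.mem_range.2 (((hb j x).1 hx).2.2.trans_le (hl.monotone (hκ.monotone hj)))⟩
  refine ⟨b, fun n => ?_, l (κ 0), fun x hx => ?_⟩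
  · induction n with
    | zero => exact hT
    | succ n ih =>
      rw [initSeg_succ]
      refine hext _ ih _ fun x hx => ?_
      obtain ⟨⟨hxX, hxY⟩, hx1, -⟩ := (hb n x).1 hx
      have : l (κ n + 1) ≤ x := not_lt.1 fun h => disjoint_left.1 (hκY n) hxY ⟨hx1, h⟩
      exact ⟨hxX, (hN _ _ (hbounded n)).le.trans this⟩
  · have hxI : x ∈ Ico (l (κ 0)) (l (κ (x + 1))) :=
      ⟨hx.2, Nat.lt_succ_self x |>.trans_le ((hκ.id_le _).trans (hl.id_le _))⟩
    obtain ⟨j, -, hj⟩ := mem_iUnion₂.1 (Ico_subset_biUnion_Ico (x + 1) (l ∘ κ) hxI)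
    exact mem_iUnion.2 ⟨j, (hb j x).2 ⟨hx.1, hj⟩⟩

theorem hasFBranch_of_isPFilterOn_of_nonMeagerFamily {F : Set (Set ℕ)} (hF : IsFilterOn F)
    (hFr : ExtendsFrechet F) (hP : IsPFilterOn F) (hnm : NonMeagerFamily F)
    {T : Set (List (Finset ℕ))} (hT : IsTree T) (hFT : IsFTree F T) : HasFBranch F T := by
  obtain ⟨X, hXF, N, hext⟩ := hFT.exists_threshold hF hP
  obtain ⟨l, hl, hN⟩ := exists_strictMono_forall_lt finite_boundedLists N
  obtain ⟨Y, hYF, hY⟩ : ∃ Y ∈ F, (missedBlocks l Y).Infinite := by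
    by_contra! h
    exact hnm ((isMeagre_setOf_finite_missedBlocks hl).mono fun x hx => h _ hx)
  obtain ⟨b, hb, m, hm⟩ := exists_branch_of_threshold hT.1 hext hl hN hY
  exact ⟨b, hb, hF.2.2.2 _ _ (hF.2.2.1 _ _ (hF.2.2.1 _ _ hXF hYF) (hFr _ (by simp))) hm⟩

/-- A filter `F` extending the Fréchet filter is a non-meager P-filter iff every
`F`-tree of finite sets has a branch whose union belongs to `F`. -/
theorem stmt11 (F : Set (Set ℕ)) (hF : IsFilterOn F) (hFr : ExtendsFrechet F) :
    (IsPFilterOn F ∧ NonMeagerFamily F) ↔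
      ∀ T : Set (List (Finset ℕ)), IsTree T → IsFTree F T →
        ∃ b : ℕ → Finset ℕ,
          (∀ n : ℕ, List.ofFn (fun i : Fin n => b i.1) ∈ T) ∧
          (⋃ n : ℕ, (b n : Set ℕ)) ∈ F :=
  ⟨fun ⟨hP, hnm⟩ _ hT hFT => hasFBranch_of_isPFilterOn_of_nonMeagerFamily hF hFr hP hnm hT hFT,
    fun htree => ⟨isPFilterOn_of_forall_hasFBranch hF htree,
      nonMeagerFamily_of_forall_hasFBranch hF hFr htree⟩⟩
end

section
/- Every filter F on ω extending the Fréchet filter, viewed as a subspace of the Cantor space 2^ω, is topologically homogeneous: for any x, y ∈ F there exists a homeomorphism h : F → F with h(x) = y. -/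
open Set

/-- Every filter on `ω` extending the Fréchet filter is topologically homogeneous
as a subspace of the Cantor space. -/
theorem stmt12 (F : Set (Set ℕ)) (hF : IsFilterOn F) (hFr : ExtendsFrechet F) :
    ∀ x y : ↥(cantorCopy F),
      ∃ h : ↥(cantorCopy F) ≃ₜ ↥(cantorCopy F), h x = y := by
  intro ⟨x, hx⟩ ⟨y, hy⟩
  set c : ℕ → Bool := fun n => xor (x n) (y n) with hc
  set f : (ℕ → Bool) → (ℕ → Bool) := fun z n => xor (z n) (c n) with hf
  have hff : ∀ z, f (f z) = z := by
    intro z; funext n; simp [hf]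
  have hcont : Continuous f := by
    apply continuous_pi
    intro n
    show Continuous ((fun b => xor b (c n)) ∘ fun z : ℕ → Bool => z n)
    exact Continuous.comp continuous_of_discreteTopology (continuous_apply n)
  have hpres : ∀ z, z ∈ cantorCopy F → f z ∈ cantorCopy F := by
    intro z hz
    obtain ⟨_, _, hinter, hsup⟩ := hF
    have h1 : toSet z ∩ (toSet x ∩ toSet y) ∈ F := hinter _ _ hz (hinter _ _ hx hy)
    refine hsup _ _ h1 ?_
    intro a ha
    have h1 : z a = true := ha.1
    have h2 : x a = true := ha.2.1
    have h3 : y a = true := ha.2.2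
    show f z a = true
    simp [hf, hc, h1, h2, h3]
  refine ⟨{
    toFun := fun z => ⟨f z, hpres z z.2⟩
    invFun := fun z => ⟨f z, hpres z z.2⟩
    left_inv := fun z => by simp [hff]
    right_inv := fun z => by simp [hff]
    continuous_toFun := (hcont.comp continuous_subtype_val).subtype_mk _
    continuous_invFun := (hcont.comp continuous_subtype_val).subtype_mk _ }, ?_⟩
  apply Subtype.ext
  funext n
  cases hxn : x n <;> cases hyn : y n <;> simp [hf, hc, hxn, hyn]
end

section
/- Let I be a non-meager P-ideal on ω containing all finite sets, and let D₀ and D₁ be two countable dense subsets of I. Then there exists a homeomorphism h : 2^ω → 2^ω (of the whole Cantor space, identified with P(ω)) such that h[D₀] = D₁ and h[I] = I. -/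
open Set

/-!
The homeomorphism is built by a back-and-forth argument in which every change of coordinates
happens inside one member `X` of the ideal, so that `I` is preserved. Since `I` is a non-meager
P-ideal, a single `X ∈ I` almost contains every point of `D₀ ∪ D₁` and still lets each `Dᵢ`
continue any finite pattern by a point that, beyond the pattern, only uses coordinates in `X`:
non-meagerness puts infinitely many blocks of any interval partition into one member of `I`, and
the P-property gathers the countably many members needed into one.

Enumerating `D₀` and `D₁` alternately, we choose pairs `(A s, B s) ∈ D₀ × D₁` and block
boundaries `M s`. On the block `[M j, M (j + 1))` the map exchanges the patterns of `A s` and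
`B s`, where `s < j` is the unique index such that the point already follows `B s` below `M j`.
Every coordinate is settled after finitely many of these involutive moves, so their limit is a
homeomorphism; it sends `A s` to `B s`, and differs from the identity only inside `X`.
-/

namespace NonMeagerPIdeal

open Filter Topology
open scoped Classical

section SwapOn

variable {α β : Type*} (U : Set α) (a b : α → β)

noncomputable def swapOn (x : α → β) : α → β :=
  if EqOn x a U then U.piecewise b x else if EqOn x b U then U.piecewise a x else x

variable {U a b}

lemma swapOn_of_eqOn_left {x : α → β} (h : EqOn x a U) : swapOn U a b x = U.piecewise b x :=
  if_pos h

lemma swapOn_eqOn_compl (x : α → β) : EqOn (swapOn U a b x) x Uᶜ := by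
  unfold swapOn
  split_ifs
  · exact U.piecewise_eqOn_compl _ _
  · exact U.piecewise_eqOn_compl _ _
  · exact eqOn_refl _ _

lemma mem_of_swapOn_apply_ne {x : α → β} {n : α} (h : swapOn U a b x n ≠ x n) :
    n ∈ U ∧ a n ≠ b n := by
  have hn : n ∈ U := by_contra fun hn => h (swapOn_eqOn_compl x hn)
  refine ⟨hn, fun hab => h ?_⟩
  unfold swapOn at h ⊢
  split_ifs at h ⊢ with h₁ h₂
  · rw [U.piecewise_eq_of_mem _ _ hn, ← hab, h₁ hn]
  · rw [U.piecewise_eq_of_mem _ _ hn, hab, h₂ hn]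
  · rfl

lemma swapOn_swapOn (x : α → β) : swapOn U a b (swapOn U a b x) = x := by
  funext n
  by_cases hn : n ∈ U
  · unfold swapOn
    split_ifs <;> simp_all [EqOn, Set.piecewise_eq_of_mem]
  · exact swapOn_eqOn_compl _ hn |>.trans (swapOn_eqOn_compl x hn)

lemma swapOn_congr {V : Set α} (hUV : U ⊆ V) {x y : α → β} (h : EqOn x y V) :
    EqOn (swapOn U a b x) (swapOn U a b y) V := by
  have hU : EqOn x y U := h.mono hUV
  have hiff : ∀ c : α → β, EqOn x c U ↔ EqOn y c U :=
    fun c => ⟨hU.symm.trans, hU.trans⟩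
  intro n hn
  unfold swapOn
  simp only [hiff a, hiff b]
  split_ifs <;> (try simp only [Set.piecewise]) <;> (try split_ifs) <;> first | rfl | exact h hn

end SwapOn

lemma exists_fresh_of_infinite {α : Type*} {u : ℕ → α} (hinf : (range u).Infinite) {S : Set α}
    (hS : S.Finite) {K : ℕ} (hK : ∀ k < K, u k ∈ S) :
    ∃ k, u k ∉ S ∧ ∀ k' ≤ K, u k' ∈ insert (u k) S := by
  have hex : ∃ k, u k ∉ S := by
    by_contra! h
    exact hinf (hS.subset (range_subset_iff.mpr h))
  refine ⟨Nat.find hex, Nat.find_spec hex, fun k' hk' => ?_⟩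
  by_cases hk'S : u k' ∈ S
  · exact mem_insert_of_mem _ hk'S
  have hle : Nat.find hex ≤ k' := Nat.find_min' hex hk'S
  have hge : k' ≤ Nat.find hex :=
    not_lt.mp fun h => Nat.find_spec hex (hK _ (h.trans_le hk'))
  rw [le_antisymm hle hge]
  exact mem_insert _ _

lemma eq_of_forall_succ_eq {α : Type*} {g : ℕ → α} {a : ℕ} (h : ∀ t, a ≤ t → g (t + 1) = g t)
    {t : ℕ} (ht : a ≤ t) : g t = g a := by
  induction t, ht using Nat.le_induction with
  | base => rfl
  | succ t hat ih => rw [h t hat, ih]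

lemma exists_forall_ge_mem_of_finite_diff {S X : Set ℕ} (h : (S \ X).Finite) :
    ∃ N, ∀ n, N ≤ n → n ∈ S → n ∈ X := by
  obtain ⟨b, hb⟩ := h.bddAbove
  exact ⟨b + 1, fun n hn hnS => by_contra fun hnX => absurd (hb ⟨hnS, hnX⟩) (by omega)⟩

lemma strictMono_iterate_max_succ (F : ℕ → ℕ) (a : ℕ) :
    StrictMono fun k => (fun m => max m (F m) + 1)^[k] a :=
  strictMono_nat_of_lt_succ fun k => by
    simp only [Function.iterate_succ_apply']
    omega

section Cylinders

variable {β : Type*} [TopologicalSpace β] [DiscreteTopology β]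

lemma isOpen_setOf_eqOn_Iio (x : ℕ → β) (c : ℕ) : IsOpen {y : ℕ → β | EqOn y x (Iio c)} := by
  have : {y : ℕ → β | EqOn y x (Iio c)} = (Iio c).pi fun i => {x i} := by
    ext y; simp [EqOn, Set.pi]
  rw [this]
  exact isOpen_set_pi (finite_Iio c) fun i _ => isOpen_discrete _

lemma exists_eqOn_Iio_of_mem_closure {D : Set (ℕ → β)} {x : ℕ → β} (hx : x ∈ closure D)
    (c : ℕ) : ∃ e ∈ D, EqOn e x (Iio c) := by
  obtain ⟨e, he, heD⟩ := mem_closure_iff.mp hx _ (isOpen_setOf_eqOn_Iio x c) fun _ _ => rfl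
  exact ⟨e, heD, he⟩

lemma continuous_of_forall_eqOn_Iio {γ : Type*} [TopologicalSpace γ] {f : (ℕ → β) → ℕ → γ}
    (hf : ∀ n, ∃ c, ∀ x y, EqOn x y (Iio c) → f x n = f y n) : Continuous f := by
  refine continuous_pi fun n => ((IsLocallyConstant.iff_eventually_eq _).mpr fun x => ?_).continuous
  obtain ⟨c, hc⟩ := hf n
  filter_upwards [(isOpen_setOf_eqOn_Iio x c).mem_nhds fun _ _ => rfl] with y hy
  exact hc y x hy

lemma exists_eqOn_Iio_subset_of_mem_nhds {β : Type*} [TopologicalSpace β] {U : Set (ℕ → β)}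
    {x : ℕ → β} (hU : U ∈ 𝓝 x) : ∃ c, {y | EqOn y x (Iio c)} ⊆ U := by
  obtain ⟨V, hVU, hV, hxV⟩ := mem_nhds_iff.mp hU
  obtain ⟨I, u, hu, hIu⟩ := isOpen_pi_iff.mp hV x hxV
  refine ⟨I.sup id + 1, fun y hy => hVU (hIu fun a ha => ?_)⟩
  rw [hy (show a < I.sup id + 1 from Nat.lt_succ_of_le (Finset.le_sup (f := id) ha))]
  exact (hu a ha).2

lemma interior_eq_empty_of_forall_eqOn_Iio {β : Type*} [TopologicalSpace β] {C : Set (ℕ → β)}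
    (h : ∀ x c, ∃ y, EqOn y x (Iio c) ∧ y ∉ C) : interior C = ∅ := by
  refine eq_empty_of_forall_notMem fun x hx => ?_
  obtain ⟨c, hc⟩ := exists_eqOn_Iio_subset_of_mem_nhds (mem_interior_iff_mem_nhds.mp hx)
  obtain ⟨y, hyx, hyC⟩ := h x c
  exact hyC (hc hyx)

lemma isNowhereDense_singleton (a : ℕ → Bool) : IsNowhereDense {a} := by
  refine isClosed_singleton.isNowhereDense_iff.mpr (interior_eq_empty_of_forall_eqOn_Iio ?_)
  intro x c
  refine ⟨Function.update x c (!a c), fun n (hn : n < c) => Function.update_of_ne hn.ne _ _,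
    fun hy => ?_⟩
  simpa using congrFun (mem_singleton_iff.mp hy) c

lemma isMeagre_of_countable {S : Set (ℕ → Bool)} (hS : S.Countable) : IsMeagre S := by
  rw [← biUnion_of_singleton S]
  exact isMeagre_biUnion hS fun a _ => (isNowhereDense_singleton a).isMeagre

end Cylinders

section Blocks

variable (M : ℕ → ℕ) (A B : ℕ → ℕ → Bool)

noncomputable def matchIndex (j : ℕ) (x : ℕ → Bool) : Option ℕ :=
  if h : ∃ s < j, EqOn x (B s) (Iio (M j)) then some (Nat.find h) else none

noncomputable def swapBlock (j : ℕ) (x : ℕ → Bool) : ℕ → Bool :=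
  (matchIndex M B j x).elim x fun s => swapOn (Ico (M j) (M (j + 1))) (A s) (B s) x

noncomputable def swapUpTo : ℕ → (ℕ → Bool) → ℕ → Bool
  | 0 => id
  | j + 1 => swapBlock M A B j ∘ swapUpTo j

noncomputable def unswapUpTo : ℕ → (ℕ → Bool) → ℕ → Bool
  | 0 => id
  | j + 1 => unswapUpTo j ∘ swapBlock M A B j

noncomputable def swapLimit (x : ℕ → Bool) : ℕ → Bool := fun n => swapUpTo M A B (n + 1) x n

noncomputable def unswapLimit (x : ℕ → Bool) : ℕ → Bool := fun n => unswapUpTo M A B (n + 1) x n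

variable {M A B}

lemma matchIndex_eq_of_iff {M' : ℕ → ℕ} {B' : ℕ → ℕ → Bool} {j : ℕ} {x y : ℕ → Bool}
    (h : ∀ s, (s < j ∧ EqOn x (B s) (Iio (M j))) ↔ (s < j ∧ EqOn y (B' s) (Iio (M' j)))) :
    matchIndex M B j x = matchIndex M' B' j y := by
  unfold matchIndex
  by_cases hx : ∃ s < j, EqOn x (B s) (Iio (M j))
  · have hy : ∃ s < j, EqOn y (B' s) (Iio (M' j)) := (exists_congr h).mp hx
    rw [dif_pos hx, dif_pos hy, Nat.find_congr' (h _)]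
  · have hy : ¬ ∃ s < j, EqOn y (B' s) (Iio (M' j)) := (exists_congr h).not.mp hx
    rw [dif_neg hx, dif_neg hy]

lemma matchIndex_congr {j : ℕ} {x y : ℕ → Bool} (h : EqOn x y (Iio (M j))) :
    matchIndex M B j x = matchIndex M B j y :=
  matchIndex_eq_of_iff fun _ => and_congr_right fun _ => ⟨h.symm.trans, h.trans⟩

lemma matchIndex_spec {j s : ℕ} {x : ℕ → Bool} (h : matchIndex M B j x = some s) :
    s < j ∧ EqOn x (B s) (Iio (M j)) := by
  unfold matchIndex at h
  split_ifs at h with hx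
  cases h
  exact Nat.find_spec hx

lemma matchIndex_eq_some {j s : ℕ} {x : ℕ → Bool} (hs : s < j) (hx : EqOn x (B s) (Iio (M j)))
    (huniq : ∀ s' < j, EqOn x (B s') (Iio (M j)) → s' = s) : matchIndex M B j x = some s := by
  have hex : ∃ s < j, EqOn x (B s) (Iio (M j)) := ⟨s, hs, hx⟩
  rw [matchIndex, dif_pos hex, huniq _ (Nat.find_spec hex).1 (Nat.find_spec hex).2]

lemma swapBlock_eqOn_compl (j : ℕ) (x : ℕ → Bool) :
    EqOn (swapBlock M A B j x) x (Ico (M j) (M (j + 1)))ᶜ := by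
  unfold swapBlock
  cases matchIndex M B j x with
  | none => exact eqOn_refl _ _
  | some s => exact swapOn_eqOn_compl x

lemma swapBlock_eqOn_Iio (j : ℕ) (x : ℕ → Bool) : EqOn (swapBlock M A B j x) x (Iio (M j)) :=
  (swapBlock_eqOn_compl j x).mono fun _ (hn : _ < M j) hn' => (not_le.mpr hn) (mem_Ico.mp hn').1

lemma swapBlock_eqOn_Ici (j : ℕ) (x : ℕ → Bool) :
    EqOn (swapBlock M A B j x) x (Ici (M (j + 1))) :=
  (swapBlock_eqOn_compl j x).mono fun _ (hn : M (j + 1) ≤ _) hn' =>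
    (not_lt.mpr hn) (mem_Ico.mp hn').2

lemma swapBlock_swapBlock (j : ℕ) (x : ℕ → Bool) :
    swapBlock M A B j (swapBlock M A B j x) = x := by
  have hmatch := matchIndex_congr (B := B) (swapBlock_eqOn_Iio (M := M) (A := A) (B := B) j x)
  unfold swapBlock at hmatch ⊢
  cases hs : matchIndex M B j x with
  | none => simp only [hs, Option.elim]
  | some s => simp only [hs, Option.elim] at hmatch ⊢; rw [hmatch]; exact swapOn_swapOn x

lemma swapBlock_congr (hM : Monotone M) {j c : ℕ} (hc : M (j + 1) ≤ c) {x y : ℕ → Bool}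
    (h : EqOn x y (Iio c)) : EqOn (swapBlock M A B j x) (swapBlock M A B j y) (Iio c) := by
  have hmatch : matchIndex M B j x = matchIndex M B j y :=
    matchIndex_congr (h.mono (Iio_subset_Iio ((hM j.le_succ).trans hc)))
  unfold swapBlock
  rw [hmatch]
  cases matchIndex M B j y with
  | none => exact h
  | some s => exact swapOn_congr (fun n hn => lt_of_lt_of_le hn.2 hc) h

lemma swapBlock_of_match {j s : ℕ} {x : ℕ → Bool} (hs : matchIndex M B j x = some s)
    (hA : EqOn x (A s) (Ico (M j) (M (j + 1)))) :
    EqOn (swapBlock M A B j x) (B s) (Ico (M j) (M (j + 1))) := by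
  intro n hn
  simp only [swapBlock, hs, Option.elim, swapOn_of_eqOn_left hA, Set.piecewise, if_pos hn]

lemma mem_of_swapBlock_apply_ne {X : Set ℕ} (hM : Monotone M)
    (htail : ∀ s n, M (s + 1) ≤ n → A s n ≠ B s n → n ∈ X) {j n : ℕ} {x : ℕ → Bool}
    (h : swapBlock M A B j x n ≠ x n) : n ∈ X := by
  unfold swapBlock at h
  cases hs : matchIndex M B j x with
  | none => simp only [hs, Option.elim, ne_eq, not_true_eq_false] at h
  | some s =>
    simp only [hs, Option.elim] at h
    obtain ⟨hn, hab⟩ := mem_of_swapOn_apply_ne h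
    exact htail s n ((hM (matchIndex_spec hs).1).trans hn.1) hab

lemma swapBlock_congr_data {M' : ℕ → ℕ} {A' B' : ℕ → ℕ → Bool} {j : ℕ} (hM₀ : M j = M' j)
    (hM₁ : M (j + 1) = M' (j + 1)) (hA : ∀ s < j, A s = A' s) (hB : ∀ s < j, B s = B' s) :
    swapBlock M A B j = swapBlock M' A' B' j := by
  funext x
  have hmatch : matchIndex M B j x = matchIndex M' B' j x :=
    matchIndex_eq_of_iff fun s => and_congr_right fun hs => by rw [hM₀, hB s hs]
  unfold swapBlock
  rw [hmatch]
  cases hs : matchIndex M' B' j x with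
  | none => rfl
  | some s =>
    have hsj := (matchIndex_spec hs).1
    simp only [Option.elim, hM₀, hM₁, hA s hsj, hB s hsj]

end Blocks

section Compositions

variable {M : ℕ → ℕ} {A B : ℕ → ℕ → Bool}

lemma swapUpTo_succ (j : ℕ) (x : ℕ → Bool) :
    swapUpTo M A B (j + 1) x = swapBlock M A B j (swapUpTo M A B j x) := rfl

lemma unswapUpTo_succ (j : ℕ) (x : ℕ → Bool) :
    unswapUpTo M A B (j + 1) x = unswapUpTo M A B j (swapBlock M A B j x) := rfl

lemma unswapUpTo_swapUpTo (j : ℕ) (x : ℕ → Bool) :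
    unswapUpTo M A B j (swapUpTo M A B j x) = x := by
  induction j with
  | zero => rfl
  | succ j ih => rw [swapUpTo_succ, unswapUpTo_succ, swapBlock_swapBlock, ih]

lemma swapUpTo_unswapUpTo (j : ℕ) (x : ℕ → Bool) :
    swapUpTo M A B j (unswapUpTo M A B j x) = x := by
  induction j generalizing x with
  | zero => rfl
  | succ j ih => rw [swapUpTo_succ, unswapUpTo_succ, ih, swapBlock_swapBlock]

lemma swapUpTo_congr_data {M' : ℕ → ℕ} {A' B' : ℕ → ℕ → Bool} {j : ℕ}
    (hM : ∀ i ≤ j, M i = M' i) (hA : ∀ s, s + 1 < j → A s = A' s)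
    (hB : ∀ s, s + 1 < j → B s = B' s) : swapUpTo M A B j = swapUpTo M' A' B' j := by
  induction j with
  | zero => rfl
  | succ j ih =>
    funext x
    rw [swapUpTo_succ, swapUpTo_succ, ih (fun i hi => hM i (by omega))
      (fun s hs => hA s (by omega)) (fun s hs => hB s (by omega)),
      swapBlock_congr_data (hM j (by omega)) (hM (j + 1) le_rfl)
      (fun s hs => hA s (by omega)) (fun s hs => hB s (by omega))]

variable (hM : Monotone M)
include hM

lemma swapUpTo_congr {j c : ℕ} (hc : M j ≤ c) {x y : ℕ → Bool} (h : EqOn x y (Iio c)) :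
    EqOn (swapUpTo M A B j x) (swapUpTo M A B j y) (Iio c) := by
  induction j with
  | zero => exact h
  | succ j ih => exact swapBlock_congr hM hc (ih ((hM j.le_succ).trans hc))

lemma unswapUpTo_congr {j c : ℕ} (hc : M j ≤ c) {x y : ℕ → Bool} (h : EqOn x y (Iio c)) :
    EqOn (unswapUpTo M A B j x) (unswapUpTo M A B j y) (Iio c) := by
  induction j generalizing x y with
  | zero => exact h
  | succ j ih => exact ih ((hM j.le_succ).trans hc) (swapBlock_congr hM hc h)

lemma swapUpTo_eqOn_Ici (j : ℕ) (x : ℕ → Bool) : EqOn (swapUpTo M A B j x) x (Ici (M j)) := by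
  induction j with
  | zero => exact eqOn_refl _ _
  | succ j ih =>
    exact (swapBlock_eqOn_Ici j _).trans (ih.mono (Ici_subset_Ici.mpr (hM j.le_succ)))

lemma swapUpTo_eqOn_of_le {j j' : ℕ} (hjj' : j ≤ j') (x : ℕ → Bool) :
    EqOn (swapUpTo M A B j' x) (swapUpTo M A B j x) (Iio (M j)) := by
  induction j', hjj' using Nat.le_induction with
  | base => exact eqOn_refl _ _
  | succ j' hjj' ih =>
    exact ((swapBlock_eqOn_Iio j' _).mono (Iio_subset_Iio (hM hjj'))).trans ih

lemma unswapUpTo_eqOn_of_le {j j' : ℕ} (hjj' : j ≤ j') (x : ℕ → Bool) :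
    EqOn (unswapUpTo M A B j' x) (unswapUpTo M A B j x) (Iio (M j)) := by
  induction j', hjj' using Nat.le_induction generalizing x with
  | base => exact eqOn_refl _ _
  | succ j' hjj' ih =>
    exact (ih _).trans (unswapUpTo_congr hM le_rfl
      ((swapBlock_eqOn_Iio j' x).mono (Iio_subset_Iio (hM hjj'))))

lemma eqOn_of_swapUpTo_eqOn {j : ℕ} {x y : ℕ → Bool}
    (h : EqOn (swapUpTo M A B j x) (swapUpTo M A B j y) (Iio (M j))) : EqOn x y (Iio (M j)) := by
  simpa only [unswapUpTo_swapUpTo] using unswapUpTo_congr (A := A) (B := B) hM le_rfl h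

variable {X : Set ℕ} (htail : ∀ s n, M (s + 1) ≤ n → A s n ≠ B s n → n ∈ X)
include htail

lemma mem_of_swapUpTo_apply_ne {j n : ℕ} {x : ℕ → Bool} (h : swapUpTo M A B j x n ≠ x n) :
    n ∈ X := by
  induction j with
  | zero => exact absurd rfl h
  | succ j ih =>
    by_cases hj : swapUpTo M A B j x n = x n
    · exact mem_of_swapBlock_apply_ne hM htail (hj ▸ h)
    · exact ih hj

lemma mem_of_unswapUpTo_apply_ne {j n : ℕ} {x : ℕ → Bool} (h : unswapUpTo M A B j x n ≠ x n) :
    n ∈ X := by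
  induction j generalizing x with
  | zero => exact absurd rfl h
  | succ j ih =>
    by_cases hj : swapBlock M A B j x n = x n
    · exact ih (hj ▸ h)
    · exact mem_of_swapBlock_apply_ne hM htail hj

end Compositions

section Limit

variable {M : ℕ → ℕ} {A B : ℕ → ℕ → Bool}

lemma swapUpTo_eqOn_of_pair (hM : Monotone M) {s T : ℕ} (hsT : s ≤ T)
    (hsep : ∀ s' < T, ∀ s'' < s', ¬ EqOn (B s') (B s'') (Iio (M (s' + 1))))
    (hpair : EqOn (swapUpTo M A B (s + 1) (A s)) (B s) (Iio (M (s + 1)))) :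
    EqOn (swapUpTo M A B (T + 1) (A s)) (B s) (Iio (M (T + 1))) := by
  suffices ∀ j, s + 1 ≤ j → j ≤ T + 1 → EqOn (swapUpTo M A B j (A s)) (B s) (Iio (M j)) from
    this (T + 1) (by omega) le_rfl
  intro j hj
  induction j, hj using Nat.le_induction with
  | base => exact fun _ => hpair
  | succ j hsj ih =>
    intro hjT
    set y := swapUpTo M A B j (A s)
    have hy : EqOn y (B s) (Iio (M j)) := ih (by omega)
    have huniq : ∀ s' < j, EqOn y (B s') (Iio (M j)) → s' = s := by
      intro s' hs' hy'
      by_contra hne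
      rcases lt_or_gt_of_ne hne with h | h
      · exact hsep s (by omega) s' h ((hy.symm.trans hy').mono (Iio_subset_Iio (hM hsj)))
      · exact hsep s' (by omega) s h ((hy'.symm.trans hy).mono (Iio_subset_Iio (hM hs')))
    have hmatch : matchIndex M B j y = some s := matchIndex_eq_some (by omega) hy huniq
    have hblock : EqOn y (A s) (Ico (M j) (M (j + 1))) :=
      (swapUpTo_eqOn_Ici hM j (A s)).mono Ico_subset_Ici_self
    intro n (hn : n < M (j + 1))
    rw [swapUpTo_succ]
    by_cases hnj : n < M j
    · exact (swapBlock_eqOn_Iio j y hnj).trans (hy hnj)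
    · exact swapBlock_of_match hmatch hblock ⟨not_lt.mp hnj, hn⟩

variable (hM : StrictMono M)
include hM

lemma lt_apply_succ (n : ℕ) : n < M (n + 1) := (Nat.lt_succ_self n).trans_le (hM.id_le _)

lemma swapLimit_eqOn (j : ℕ) (x : ℕ → Bool) :
    EqOn (swapLimit M A B x) (swapUpTo M A B j x) (Iio (M j)) := by
  intro n (hn : n < M j)
  rcases le_or_gt (n + 1) j with h | h
  · exact (swapUpTo_eqOn_of_le hM.monotone h x (lt_apply_succ hM n)).symm
  · exact swapUpTo_eqOn_of_le hM.monotone h.le x hn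

lemma unswapLimit_eqOn (j : ℕ) (x : ℕ → Bool) :
    EqOn (unswapLimit M A B x) (unswapUpTo M A B j x) (Iio (M j)) := by
  intro n (hn : n < M j)
  rcases le_or_gt (n + 1) j with h | h
  · exact (unswapUpTo_eqOn_of_le hM.monotone h x (lt_apply_succ hM n)).symm
  · exact unswapUpTo_eqOn_of_le hM.monotone h.le x hn

lemma unswapLimit_swapLimit (x : ℕ → Bool) : unswapLimit M A B (swapLimit M A B x) = x := by
  funext n
  have h := unswapUpTo_congr (A := A) (B := B) hM.monotone le_rfl
    (swapLimit_eqOn (A := A) (B := B) hM (n + 1) x)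
  rw [unswapUpTo_swapUpTo] at h
  exact h (lt_apply_succ hM n)

lemma swapLimit_unswapLimit (x : ℕ → Bool) : swapLimit M A B (unswapLimit M A B x) = x := by
  funext n
  have h := swapUpTo_congr (A := A) (B := B) hM.monotone le_rfl
    (unswapLimit_eqOn (A := A) (B := B) hM (n + 1) x)
  rw [swapUpTo_unswapUpTo] at h
  exact h (lt_apply_succ hM n)

lemma continuous_swapLimit : Continuous (swapLimit M A B) :=
  continuous_of_forall_eqOn_Iio fun n =>
    ⟨M (n + 1), fun _ _ h => swapUpTo_congr hM.monotone le_rfl h (lt_apply_succ hM n)⟩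

lemma continuous_unswapLimit : Continuous (unswapLimit M A B) :=
  continuous_of_forall_eqOn_Iio fun n =>
    ⟨M (n + 1), fun _ _ h => unswapUpTo_congr hM.monotone le_rfl h (lt_apply_succ hM n)⟩

lemma swapLimit_of_pair (hsep : ∀ s', ∀ s'' < s', ¬ EqOn (B s') (B s'') (Iio (M (s' + 1))))
    {s : ℕ} (hpair : EqOn (swapUpTo M A B (s + 1) (A s)) (B s) (Iio (M (s + 1)))) :
    swapLimit M A B (A s) = B s := by
  funext n
  have hn : n < M (s + n + 1) := (lt_apply_succ hM n).trans_le (hM.monotone (by omega))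
  exact (swapLimit_eqOn hM _ _ hn).trans
    (swapUpTo_eqOn_of_pair hM.monotone le_self_add (fun s' _ => hsep s') hpair hn)

end Limit

noncomputable def swapHomeomorph {M : ℕ → ℕ} (A B : ℕ → ℕ → Bool) (hM : StrictMono M) :
    (ℕ → Bool) ≃ₜ (ℕ → Bool) where
  toFun := swapLimit M A B
  invFun := unswapLimit M A B
  left_inv := unswapLimit_swapLimit hM
  right_inv := swapLimit_unswapLimit hM
  continuous_toFun := continuous_swapLimit hM
  continuous_invFun := continuous_unswapLimit hM

def CompletesWithin (D : Set (ℕ → Bool)) (X : Set ℕ) : Prop :=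
  ∀ (g : ℕ → Bool) (N : ℕ), ∃ e ∈ D, EqOn e g (Iio N) ∧ ∀ n, N ≤ n → e n = true → n ∈ X

lemma CompletesWithin.mono {D : Set (ℕ → Bool)} {X Y : Set ℕ} (h : CompletesWithin D X)
    (hXY : X ⊆ Y) : CompletesWithin D Y := fun g N => by
  obtain ⟨e, heD, heg, he⟩ := h g N
  exact ⟨e, heD, heg, fun n hn hen => hXY (he n hn hen)⟩

section Ideal

variable {I : Set (Set ℕ)}

lemma infinite_of_cantorCopy_subset_closure (hNM : NonMeagerFamily I) {D : Set (ℕ → Bool)}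
    (hD : cantorCopy I ⊆ closure D) : D.Infinite := fun hfin =>
  hNM ((isMeagre_of_countable hfin.countable).mono (hfin.isClosed.closure_eq ▸ hD))

lemma _root_.IsPIdealOn.exists_finite_diff {α : Type*} {I : Set (Set α)} (hP : IsPIdealOn I)
    (hI : ∅ ∈ I) {𝒳 : Set (Set α)} (hc : 𝒳.Countable) (hsub : 𝒳 ⊆ I) :
    ∃ Y ∈ I, ∀ X ∈ 𝒳, (X \ Y).Finite := by
  rcases 𝒳.eq_empty_or_nonempty with rfl | hne
  · exact ⟨∅, hI, fun _ h => h.elim⟩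
  obtain ⟨f, rfl⟩ := hc.exists_eq_range hne
  obtain ⟨Y, hY, hfY⟩ := hP f fun n => hsub (mem_range_self n)
  exact ⟨Y, hY, forall_mem_range.mpr hfY⟩

def missesBlocksFrom (f : ℕ → ℕ) (K : ℕ) : Set (ℕ → Bool) :=
  {x | ∀ k, K ≤ k → ¬ Ico (f k) (f (k + 1)) ⊆ toSet x}

lemma isClosed_missesBlocksFrom (f : ℕ → ℕ) (K : ℕ) : IsClosed (missesBlocksFrom f K) := by
  have hopen : ∀ k, IsOpen {x : ℕ → Bool | Ico (f k) (f (k + 1)) ⊆ toSet x} := fun k => by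
    have : {x : ℕ → Bool | Ico (f k) (f (k + 1)) ⊆ toSet x} =
        ⋂ j ∈ Ico (f k) (f (k + 1)), (fun x : ℕ → Bool => x j) ⁻¹' {true} := by
      ext x; simp [subset_def, toSet]
    rw [this]
    exact (finite_Ico _ _).isOpen_biInter fun j _ =>
      (isOpen_discrete _).preimage (continuous_apply j)
  have : missesBlocksFrom f K = ⋂ k ∈ Ici K, {x | Ico (f k) (f (k + 1)) ⊆ toSet x}ᶜ := by
    ext x; simp [missesBlocksFrom]
  rw [this]
  exact isClosed_biInter fun k _ => (hopen k).isClosed_compl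

lemma isNowhereDense_missesBlocksFrom {f : ℕ → ℕ} (hf : StrictMono f) (K : ℕ) :
    IsNowhereDense (missesBlocksFrom f K) := by
  refine (isClosed_missesBlocksFrom f K).isNowhereDense_iff.mpr
    (interior_eq_empty_of_forall_eqOn_Iio fun x c => ?_)
  set k := max K c
  refine ⟨(Ico (f k) (f (k + 1))).piecewise (fun _ => true) x, fun n (hn : n < c) => ?_,
    fun hy => hy k (le_max_left _ _) fun n hn => ?_⟩
  · have : n < f k := hn.trans_le ((le_max_right _ _).trans (hf.id_le k))
    simp [Set.piecewise, this.not_ge]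
  · simp [toSet, Set.piecewise, mem_Ico.mp hn]

lemma exists_mem_frequently_block_subset (hNM : NonMeagerFamily I) {f : ℕ → ℕ}
    (hf : StrictMono f) : ∃ Z ∈ I, ∃ᶠ k in atTop, Ico (f k) (f (k + 1)) ⊆ Z := by
  by_contra! h
  refine hNM ((isMeagre_iUnion fun K => (isNowhereDense_missesBlocksFrom hf K).isMeagre).mono ?_)
  intro x hx
  obtain ⟨K, hK⟩ := eventually_atTop.mp (h _ hx)
  exact mem_iUnion.mpr ⟨K, hK⟩

lemma exists_eqOn_indicator (hfin : ContainsFinites I) {D : Set (ℕ → Bool)}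
    (hdense : cantorCopy I ⊆ closure D) {X : Set ℕ} (hDX : ∀ x ∈ D, (toSet x \ X).Finite)
    (p : Finset ℕ) (n : ℕ) : ∃ e ∈ D, EqOn e (fun i => decide (i ∈ p)) (Iio n) ∧
      ∃ N, ∀ m, N ≤ m → e m = true → m ∈ X := by
  have hp : (fun i => decide (i ∈ p)) ∈ cantorCopy I := hfin _ (by simp [toSet])
  obtain ⟨e, heD, he⟩ := exists_eqOn_Iio_of_mem_closure (hdense hp) n
  exact ⟨e, heD, he, exists_forall_ge_mem_of_finite_diff (hDX e heD)⟩

lemma exists_completesWithin (hI : IsIdealOn I) (hP : IsPIdealOn I) (hNM : NonMeagerFamily I)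
    (hfin : ContainsFinites I) {D : Set (ℕ → Bool)} (hDI : D ⊆ cantorCopy I)
    (hdense : cantorCopy I ⊆ closure D) (hD : D.Countable) :
    ∃ X ∈ I, (∀ x ∈ D, (toSet x \ X).Finite) ∧ CompletesWithin D X := by
  obtain ⟨X₀, hX₀I, hX₀⟩ :=
    hP.exists_finite_diff hI.1 (hD.image toSet) (image_subset_iff.mpr hDI)
  have hX₀D : ∀ x ∈ D, (toSet x \ X₀).Finite := fun x hx => hX₀ _ (mem_image_of_mem _ hx)
  choose e heD he N hN using exists_eqOn_indicator hfin hdense hX₀D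
  -- The `k`-th block of `blocks p` is long enough to hold all points of `e p (blocks p k)`
  -- outside `X₀`; a member `Z p` of `I` containing infinitely many blocks then absorbs them.
  set blocks : Finset ℕ → ℕ → ℕ := fun p k => (fun m => max m (N p m) + 1)^[k] 0
  have hblocks : ∀ p, StrictMono (blocks p) := fun p => strictMono_iterate_max_succ _ _
  choose Z hZI hZ using fun p => exists_mem_frequently_block_subset hNM (hblocks p)
  obtain ⟨W, hWI, hW⟩ :=
    hP.exists_finite_diff hI.1 (countable_range Z) (range_subset_iff.mpr hZI)
  refine ⟨X₀ ∪ W, hI.2.2.1 _ _ hX₀I hWI,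
    fun x hx => (hX₀D x hx).subset (sdiff_subset_sdiff_right subset_union_left), fun g N₀ => ?_⟩
  set p := (Finset.range N₀).filter fun i => g i = true
  obtain ⟨b, hb⟩ := exists_forall_ge_mem_of_finite_diff (hW _ (mem_range_self p))
  obtain ⟨k, hk, hkZ⟩ := frequently_atTop.mp (hZ p) (N₀ + b)
  set n := blocks p k
  have hkn : k ≤ n := (hblocks p).id_le k
  have hnext : blocks p (k + 1) = max n (N p n) + 1 := Function.iterate_succ_apply' _ _ _
  refine ⟨e p n, heD p n, fun i (hi : i < N₀) => ?_, fun i hi hei => ?_⟩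
  · rw [he p n (show i < n by omega)]
    cases hg : g i <;> simp [p, hi, hg]
  · by_cases hin : i < n
    · rw [he p n hin] at hei
      simp only [p, Finset.mem_filter, Finset.mem_range, decide_eq_true_eq] at hei
      omega
    by_cases hiX : i ∈ X₀
    · exact Or.inl hiX
    have hiN : i < N p n := by_contra fun h => hiX (hN p n i (not_lt.mp h) hei)
    exact Or.inr (hb i (by omega) (hkZ ⟨not_lt.mp hin, by omega⟩))

end Ideal

lemma mem_of_apply_ne_of_tails {X : Set ℕ} {N : ℕ} {x y : ℕ → Bool}
    (hx : ∀ n, N ≤ n → x n = true → n ∈ X) (hy : ∀ n, N ≤ n → y n = true → n ∈ X) :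
    ∀ n, N ≤ n → x n ≠ y n → n ∈ X := by
  intro n hn hxy
  cases hxn : x n
  · exact hy n hn (by rw [hxn] at hxy; cases hyn : y n <;> simp_all)
  · exact hx n hn hxn

lemma exists_separating_bound {X : Set ℕ} {x : ℕ → Bool} (hx : (toSet x \ X).Finite)
    {f : ℕ → ℕ → Bool} {t : ℕ} (hne : ∀ s < t, x ≠ f s) (c : ℕ) :
    ∃ N, c < N ∧ (∀ n, N ≤ n → x n = true → n ∈ X) ∧ ∀ s < t, ¬ EqOn x (f s) (Iio N) := by
  have htail : ∀ᶠ N in atTop, ∀ n, N ≤ n → x n = true → n ∈ X := by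
    obtain ⟨N₀, hN₀⟩ := exists_forall_ge_mem_of_finite_diff hx
    exact eventually_atTop.mpr ⟨N₀, fun N hN n hn => hN₀ n (hN.trans hn)⟩
  have hsep : ∀ᶠ N in atTop, ∀ s ∈ Iio t, ¬ EqOn x (f s) (Iio N) := by
    refine (eventually_all_finite (finite_Iio t)).mpr fun s hs => ?_
    obtain ⟨n, hn⟩ := Function.ne_iff.mp (hne s hs)
    exact eventually_atTop.mpr ⟨n + 1, fun N hN h => hn (h (show n < N by omega))⟩
  exact ((eventually_gt_atTop c).and (htail.and hsep)).exists

/-- A stage of the back-and-forth construction. At stage `t` only the boundaries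
`M 0, …, M t` and the pairs `(A s, B s)`, `s < t`, are meaningful. -/
structure Stage where
  M : ℕ → ℕ
  A : ℕ → ℕ → Bool
  B : ℕ → ℕ → Bool

namespace Stage

variable (D₀ D₁ : Set (ℕ → Bool)) (X : Set ℕ)

structure GoodPair (F : Stage) (s : ℕ) : Prop where
  memA : F.A s ∈ D₀
  memB : F.B s ∈ D₁
  tail : ∀ n, F.M (s + 1) ≤ n → F.A s n ≠ F.B s n → n ∈ X
  sep : ∀ s' < s, ¬ EqOn (F.B s) (F.B s') (Iio (F.M (s + 1)))
  swap : EqOn (swapUpTo F.M F.A F.B (s + 1) (F.A s)) (F.B s) (Iio (F.M (s + 1)))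

structure IsGood (F : Stage) (t : ℕ) : Prop where
  mono : StrictMono F.M
  pair : ∀ s < t, F.GoodPair D₀ D₁ X s

structure Extends (F' F : Stage) (t : ℕ) : Prop where
  M : ∀ i ≤ t, F'.M i = F.M i
  A : ∀ s < t, F'.A s = F.A s
  B : ∀ s < t, F'.B s = F.B s

-- The boundaries beyond `t + 1` are placeholders keeping `M` strictly monotone.
def setBound (F : Stage) (t N : ℕ) : Stage :=
  { F with M := fun i => if i ≤ t then F.M i else N + (i - (t + 1)) }

def addPair (F : Stage) (t : ℕ) (a b : ℕ → Bool) : Stage :=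
  { F with A := Function.update F.A t a, B := Function.update F.B t b }

-- `u k` is enumerated at stage `2 * k`, `v k` at stage `2 * k + 1`.
structure Covers (u v : ℕ → ℕ → Bool) (F : Stage) (t : ℕ) : Prop where
  left : ∀ k, 2 * k < t → u k ∈ F.A '' Iio t
  right : ∀ k, 2 * k + 1 < t → v k ∈ F.B '' Iio t

section Extension

variable {D₀ D₁ X} {F : Stage} {t : ℕ}

lemma GoodPair.congr {F' : Stage} {s : ℕ} (h : F.GoodPair D₀ D₁ X s)
    (hM : ∀ i ≤ s + 1, F'.M i = F.M i) (hA : ∀ s' ≤ s, F'.A s' = F.A s')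
    (hB : ∀ s' ≤ s, F'.B s' = F.B s') : F'.GoodPair D₀ D₁ X s where
  memA := hA s le_rfl ▸ h.memA
  memB := hB s le_rfl ▸ h.memB
  tail := by rw [hM _ le_rfl, hA s le_rfl, hB s le_rfl]; exact h.tail
  sep s' hs' := by rw [hM _ le_rfl, hB s le_rfl, hB s' hs'.le]; exact h.sep s' hs'
  swap := by
    rw [hM _ le_rfl, hA s le_rfl, hB s le_rfl, swapUpTo_congr_data (fun i hi => hM i hi)
      (fun s' hs' => hA s' (by omega)) (fun s' hs' => hB s' (by omega))]
    exact h.swap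

lemma setBound_M_of_le {N i : ℕ} (h : i ≤ t) : (F.setBound t N).M i = F.M i := if_pos h

lemma setBound_M_succ {N : ℕ} : (F.setBound t N).M (t + 1) = N := by simp [setBound]

lemma strictMono_setBound {N : ℕ} (hF : StrictMono F.M) (hN : F.M t < N) :
    StrictMono (F.setBound t N).M := by
  refine strictMono_nat_of_lt_succ fun i => ?_
  simp only [setBound]
  split_ifs with h₁ h₂
  · exact hF i.lt_succ_self
  · obtain rfl : i = t := by omega
    omega
  · omega
  · omega

lemma IsGood.setBound {N : ℕ} (hF : F.IsGood D₀ D₁ X t) (hN : F.M t < N) :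
    (F.setBound t N).IsGood D₀ D₁ X t :=
  ⟨strictMono_setBound hF.mono hN, fun s hs => (hF.pair s hs).congr
    (fun _ hi => setBound_M_of_le (by omega)) (fun _ _ => rfl) (fun _ _ => rfl)⟩

lemma IsGood.swapUpTo_eqOn (hF : F.IsGood D₀ D₁ X t) {s : ℕ} (hs : s < t) :
    EqOn (swapUpTo F.M F.A F.B (t + 1) (F.A s)) (F.B s) (Iio (F.M (t + 1))) :=
  swapUpTo_eqOn_of_pair hF.mono.monotone hs.le (fun s' hs' => (hF.pair s' hs').sep)
    (hF.pair s hs).swap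

lemma IsGood.addPair (hF : F.IsGood D₀ D₁ X t) {a b : ℕ → Bool} (ha : a ∈ D₀) (hb : b ∈ D₁)
    (htail : ∀ n, F.M (t + 1) ≤ n → a n ≠ b n → n ∈ X)
    (hsep : ∀ s < t, ¬ EqOn b (F.B s) (Iio (F.M (t + 1))))
    (hswap : EqOn (swapUpTo F.M F.A F.B (t + 1) a) b (Iio (F.M (t + 1)))) :
    (F.addPair t a b).IsGood D₀ D₁ X (t + 1) where
  mono := hF.mono
  pair s hs := by
    rcases Nat.lt_succ_iff_lt_or_eq.mp hs with hs | rfl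
    · exact (hF.pair s hs).congr (fun _ _ => rfl)
        (fun s' hs' => Function.update_of_ne (by omega) _ _)
        (fun s' hs' => Function.update_of_ne (by omega) _ _)
    · have hold : swapUpTo F.M (Function.update F.A s a) (Function.update F.B s b) (s + 1) =
          swapUpTo F.M F.A F.B (s + 1) := swapUpTo_congr_data (fun _ _ => rfl)
        (fun s' hs' => Function.update_of_ne (by omega) _ _)
        (fun s' hs' => Function.update_of_ne (by omega) _ _)
      refine ⟨by simpa [Stage.addPair] using ha, by simpa [Stage.addPair] using hb,
        by simpa [Stage.addPair] using htail, fun s' hs' => ?_, ?_⟩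
      · simpa [Stage.addPair, Function.update_of_ne hs'.ne] using hsep s' hs'
      · simpa [Stage.addPair, hold] using hswap

lemma extends_addPair_setBound (N : ℕ) (a b : ℕ → Bool) :
    ((F.setBound t N).addPair t a b).Extends F t :=
  ⟨fun _ hi => setBound_M_of_le hi, fun _ hs => Function.update_of_ne hs.ne _ _,
    fun _ hs => Function.update_of_ne hs.ne _ _⟩

lemma Extends.insert_image_A_subset {F' : Stage} (h : F'.Extends F t) :
    insert (F'.A t) (F.A '' Iio t) ⊆ F'.A '' Iio (t + 1) := by
  rintro _ (rfl | ⟨s, hs, rfl⟩)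
  · exact ⟨t, t.lt_succ_self, rfl⟩
  · exact ⟨s, Nat.lt_succ_of_lt hs, h.A s hs⟩

lemma Extends.insert_image_B_subset {F' : Stage} (h : F'.Extends F t) :
    insert (F'.B t) (F.B '' Iio t) ⊆ F'.B '' Iio (t + 1) := by
  rintro _ (rfl | ⟨s, hs, rfl⟩)
  · exact ⟨t, t.lt_succ_self, rfl⟩
  · exact ⟨s, Nat.lt_succ_of_lt hs, h.B s hs⟩

lemma IsGood.exists_extend_left (hF : F.IsGood D₀ D₁ X t) (hc : CompletesWithin D₁ X)
    {d : ℕ → Bool} (hd : d ∈ D₀) (hdX : (toSet d \ X).Finite) (hnew : ∀ s < t, d ≠ F.A s) :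
    ∃ F' : Stage, F'.Extends F t ∧ F'.IsGood D₀ D₁ X (t + 1) ∧ F'.A t = d := by
  obtain ⟨N, hN, hdtail, hdsep⟩ := exists_separating_bound hdX hnew (F.M t)
  set G := F.setBound t N
  have hG : G.IsGood D₀ D₁ X t := hF.setBound hN
  have hGN : G.M (t + 1) = N := setBound_M_succ
  rw [← hGN] at hdtail hdsep
  obtain ⟨e, he, hed, hetail⟩ := hc (swapUpTo G.M G.A G.B (t + 1) d) (G.M (t + 1))
  refine ⟨G.addPair t d e, extends_addPair_setBound N d e,
    hG.addPair hd he (mem_of_apply_ne_of_tails hdtail hetail) (fun s hs hes => ?_) hed.symm,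
    Function.update_self _ _ _⟩
  -- `swapUpTo` is injective below `M (t + 1)` and sends `A s` to `B s` there, while `d ≠ A s`.
  exact hdsep s hs (eqOn_of_swapUpTo_eqOn hG.mono.monotone
    (hed.symm.trans (hes.trans (hG.swapUpTo_eqOn hs).symm)))

lemma IsGood.exists_extend_right (hF : F.IsGood D₀ D₁ X t) (hc : CompletesWithin D₀ X)
    {b : ℕ → Bool} (hb : b ∈ D₁) (hbX : (toSet b \ X).Finite) (hnew : ∀ s < t, b ≠ F.B s) :
    ∃ F' : Stage, F'.Extends F t ∧ F'.IsGood D₀ D₁ X (t + 1) ∧ F'.B t = b := by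
  obtain ⟨N, hN, hbtail, hbsep⟩ := exists_separating_bound hbX hnew (F.M t)
  set G := F.setBound t N
  have hG : G.IsGood D₀ D₁ X t := hF.setBound hN
  have hGN : G.M (t + 1) = N := setBound_M_succ
  rw [← hGN] at hbtail hbsep
  obtain ⟨a, ha, hab, hatail⟩ := hc (unswapUpTo G.M G.A G.B (t + 1) b) (G.M (t + 1))
  have hswap := swapUpTo_congr (A := G.A) (B := G.B) hG.mono.monotone le_rfl hab
  rw [swapUpTo_unswapUpTo] at hswap
  exact ⟨G.addPair t a b, extends_addPair_setBound N a b,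
    hG.addPair ha hb (mem_of_apply_ne_of_tails hatail hbtail) hbsep hswap,
    Function.update_self _ _ _⟩

end Extension

def limit (F : ℕ → Stage) : Stage :=
  ⟨fun i => (F i).M i, fun s => (F (s + 1)).A s, fun s => (F (s + 1)).B s⟩

lemma limit_extends {F : ℕ → Stage} (hF : ∀ t, (F (t + 1)).Extends (F t) t) (t : ℕ) :
    (limit F).Extends (F t) t :=
  ⟨fun i hi => (eq_of_forall_succ_eq (g := fun t => (F t).M i) (fun t => (hF t).M i) hi).symm,
    fun s hs => (eq_of_forall_succ_eq (g := fun t => (F t).A s) (fun t => (hF t).A s) hs).symm,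
    fun s hs => (eq_of_forall_succ_eq (g := fun t => (F t).B s) (fun t => (hF t).B s) hs).symm⟩

section Construction

variable {D₀ D₁ X} {u v : ℕ → ℕ → Bool}
  (hu : range u = D₀) (hv : range v = D₁) (hX₀ : ∀ x ∈ D₀, (toSet x \ X).Finite)
  (hX₁ : ∀ x ∈ D₁, (toSet x \ X).Finite) (hc₀ : CompletesWithin D₀ X)
  (hc₁ : CompletesWithin D₁ X) (hinf₀ : D₀.Infinite) (hinf₁ : D₁.Infinite)
include hu hv hX₀ hX₁ hc₀ hc₁ hinf₀ hinf₁

lemma IsGood.exists_next {F : Stage} {t : ℕ} (hF : F.IsGood D₀ D₁ X t) (hcov : F.Covers u v t) :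
    ∃ F' : Stage, F'.Extends F t ∧ F'.IsGood D₀ D₁ X (t + 1) ∧ F'.Covers u v (t + 1) := by
  obtain ⟨m, rfl | rfl⟩ := Nat.even_or_odd' t
  · obtain ⟨k, hkS, hk⟩ := exists_fresh_of_infinite (hu ▸ hinf₀) ((finite_Iio (2 * m)).image F.A)
      (K := m) fun k hk => hcov.left k (by omega)
    have hkD : u k ∈ D₀ := hu ▸ mem_range_self k
    obtain ⟨F', hext, hgood, hA⟩ :=
      hF.exists_extend_left hc₁ hkD (hX₀ _ hkD) fun s hs h => hkS ⟨s, hs, h.symm⟩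
    refine ⟨F', hext, hgood, ⟨fun k' hk' => hext.insert_image_A_subset ?_,
      fun k' hk' => hext.insert_image_B_subset (mem_insert_of_mem _ (hcov.right k' ?_))⟩⟩
    · rw [hA]
      exact hk k' (by omega)
    · omega
  · obtain ⟨k, hkS, hk⟩ := exists_fresh_of_infinite (hv ▸ hinf₁)
      ((finite_Iio (2 * m + 1)).image F.B) (K := m) fun k hk => hcov.right k (by omega)
    have hkD : v k ∈ D₁ := hv ▸ mem_range_self k
    obtain ⟨F', hext, hgood, hB⟩ :=
      hF.exists_extend_right hc₀ hkD (hX₁ _ hkD) fun s hs h => hkS ⟨s, hs, h.symm⟩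
    refine ⟨F', hext, hgood, ⟨fun k' hk' => hext.insert_image_A_subset
      (mem_insert_of_mem _ (hcov.left k' ?_)), fun k' hk' => hext.insert_image_B_subset ?_⟩⟩
    · omega
    · rw [hB]
      exact hk k' (by omega)

lemma exists_stages : ∃ F : ℕ → Stage, ∀ t,
    (F t).IsGood D₀ D₁ X t ∧ (F t).Covers u v t ∧ (F (t + 1)).Extends (F t) t := by
  let Good t := {F : Stage // F.IsGood D₀ D₁ X t ∧ F.Covers u v t}
  have hnext : ∀ t (F : Good t), ∃ F' : Good (t + 1), F'.1.Extends F.1 t := fun t F => by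
    obtain ⟨F', hext, hgood, hcov⟩ := F.2.1.exists_next hu hv hX₀ hX₁ hc₀ hc₁ hinf₀ hinf₁ F.2.2
    exact ⟨⟨F', hgood, hcov⟩, hext⟩
  choose next hnext using hnext
  let F₀ : Good 0 := ⟨⟨id, fun _ _ => false, fun _ _ => false⟩,
    ⟨strictMono_id, fun _ h => absurd h (Nat.not_lt_zero _)⟩,
    ⟨fun _ h => absurd h (Nat.not_lt_zero _), fun _ h => absurd h (Nat.not_lt_zero _)⟩⟩
  let seq : (t : ℕ) → Good t := fun t => Nat.rec (motive := Good) F₀ next t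
  exact ⟨fun t => (seq t).1, fun t => ⟨(seq t).2.1, (seq t).2.2, hnext t (seq t)⟩⟩

lemma exists_limit : ∃ L : Stage, StrictMono L.M ∧ (∀ s, L.GoodPair D₀ D₁ X s) ∧
    range L.A = D₀ ∧ range L.B = D₁ := by
  obtain ⟨F, hF⟩ := exists_stages hu hv hX₀ hX₁ hc₀ hc₁ hinf₀ hinf₁
  have hext := limit_extends fun t => (hF t).2.2
  have hpair : ∀ s, (limit F).GoodPair D₀ D₁ X s := fun s =>
    ((hF (s + 1)).1.pair s s.lt_succ_self).congr (hext (s + 1)).M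
      (fun s' hs' => (hext (s + 1)).A s' (Nat.lt_succ_of_le hs'))
      (fun s' hs' => (hext (s + 1)).B s' (Nat.lt_succ_of_le hs'))
  refine ⟨limit F, strictMono_nat_of_lt_succ fun i => ?_, hpair, ?_, ?_⟩
  · rw [(hext (i + 1)).M i i.le_succ, (hext (i + 1)).M (i + 1) le_rfl]
    exact (hF (i + 1)).1.mono i.lt_succ_self
  · refine (range_subset_iff.mpr fun s => (hpair s).memA).antisymm
      (hu ▸ range_subset_iff.mpr fun k => ?_)
    obtain ⟨s, hs, hsk⟩ := (hF (2 * k + 1)).2.1.left k (by omega)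
    exact ⟨s, ((hext (2 * k + 1)).A s hs).trans hsk⟩
  · refine (range_subset_iff.mpr fun s => (hpair s).memB).antisymm
      (hv ▸ range_subset_iff.mpr fun k => ?_)
    obtain ⟨s, hs, hsk⟩ := (hF (2 * k + 2)).2.1.right k (by omega)
    exact ⟨s, ((hext (2 * k + 2)).B s hs).trans hsk⟩

end Construction

end Stage

theorem exists_homeomorph_of_completesWithin {D₀ D₁ : Set (ℕ → Bool)} {X : Set ℕ}
    (hD₀ : D₀.Countable) (hD₁ : D₁.Countable) (hinf₀ : D₀.Infinite) (hinf₁ : D₁.Infinite)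
    (hX₀ : ∀ x ∈ D₀, (toSet x \ X).Finite) (hX₁ : ∀ x ∈ D₁, (toSet x \ X).Finite)
    (hc₀ : CompletesWithin D₀ X) (hc₁ : CompletesWithin D₁ X) :
    ∃ h : (ℕ → Bool) ≃ₜ (ℕ → Bool), h '' D₀ = D₁ ∧
      (∀ x n, h x n ≠ x n → n ∈ X) ∧ ∀ x n, h.symm x n ≠ x n → n ∈ X := by
  obtain ⟨u, hu⟩ := hD₀.exists_eq_range hinf₀.nonempty
  obtain ⟨v, hv⟩ := hD₁.exists_eq_range hinf₁.nonempty
  obtain ⟨L, hM, hpair, hA, hB⟩ :=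
    Stage.exists_limit hu.symm hv.symm hX₀ hX₁ hc₀ hc₁ hinf₀ hinf₁
  have htail : ∀ s n, L.M (s + 1) ≤ n → L.A s n ≠ L.B s n → n ∈ X := fun s => (hpair s).tail
  refine ⟨swapHomeomorph L.A L.B hM, ?_, fun x n h => mem_of_swapUpTo_apply_ne hM.monotone htail h,
    fun x n h => mem_of_unswapUpTo_apply_ne hM.monotone htail h⟩
  rw [← hA, ← hB, ← range_comp]
  congr 1
  funext s
  exact swapLimit_of_pair hM (fun s' => (hpair s').sep) (hpair s).swap

lemma toSet_injective : Function.Injective (toSet (α := ℕ)) :=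
  fun _ _ h => funext fun n => Bool.eq_iff_iff.mpr (Set.ext_iff.mp h n)

variable {I : Set (Set ℕ)}

lemma toSet_mem_of_apply_ne (hI : IsIdealOn I) {X : Set ℕ} (hX : X ∈ I) {x y : ℕ → Bool}
    (hx : toSet x ∈ I) (h : ∀ n, y n ≠ x n → n ∈ X) : toSet y ∈ I := by
  refine hI.2.2.2 _ _ (hI.2.2.1 _ _ hx hX) fun n (hn : y n = true) => ?_
  by_cases hxn : x n = true
  · exact Or.inl hxn
  · exact Or.inr (h n (by rw [hn]; exact Ne.symm hxn))

lemma image_cantorCopy_eq (hI : IsIdealOn I) {X : Set ℕ} (hX : X ∈ I)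
    (h : (ℕ → Bool) ≃ₜ (ℕ → Bool)) (hh : ∀ x n, h x n ≠ x n → n ∈ X)
    (hh' : ∀ x n, h.symm x n ≠ x n → n ∈ X) : h '' cantorCopy I = cantorCopy I := by
  rw [h.image_eq_preimage_symm]
  ext x
  refine ⟨fun hx => toSet_mem_of_apply_ne hI hX hx fun n hn => ?_,
    fun hx => toSet_mem_of_apply_ne hI hX hx (hh' x)⟩
  simpa using hh (h.symm x) n (by simpa using hn)

end NonMeagerPIdeal

open NonMeagerPIdeal

/-- For a non-meager P-ideal `I` and countable dense subsets `D₀`, `D₁` of `I` there is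
an autohomeomorphism of the whole Cantor space with `h[D₀] = D₁` and `h[I] = I`. -/
theorem stmt14 (I : Set (Set ℕ)) (hI : IsIdealOn I) (hfin : ContainsFinites I)
    (hP : IsPIdealOn I) (hNM : NonMeagerFamily I)
    (D₀ D₁ : Set (Set ℕ)) (h0c : D₀.Countable) (h1c : D₁.Countable)
    (h0d : DenseIn D₀ I) (h1d : DenseIn D₁ I) :
    ∃ h : (ℕ → Bool) ≃ₜ (ℕ → Bool),
      h '' cantorCopy D₀ = cantorCopy D₁ ∧ h '' cantorCopy I = cantorCopy I := by
  have hc₀ : (cantorCopy D₀).Countable := h0c.preimage toSet_injective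
  have hc₁ : (cantorCopy D₁).Countable := h1c.preimage toSet_injective
  obtain ⟨X₀, hX₀I, hX₀, hcomp₀⟩ :=
    exists_completesWithin hI hP hNM hfin (preimage_mono h0d.1) h0d.2 hc₀
  obtain ⟨X₁, hX₁I, hX₁, hcomp₁⟩ :=
    exists_completesWithin hI hP hNM hfin (preimage_mono h1d.1) h1d.2 hc₁
  obtain ⟨h, hD, hh, hh'⟩ := exists_homeomorph_of_completesWithin hc₀ hc₁
    (infinite_of_cantorCopy_subset_closure hNM h0d.2)
    (infinite_of_cantorCopy_subset_closure hNM h1d.2)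
    (fun x hx => (hX₀ x hx).subset (sdiff_subset_sdiff_right subset_union_left))
    (fun x hx => (hX₁ x hx).subset (sdiff_subset_sdiff_right subset_union_right))
    (hcomp₀.mono subset_union_left) (hcomp₁.mono subset_union_right)
  exact ⟨h, hD, image_cantorCopy_eq hI (hI.2.2.1 _ _ hX₀I hX₁I) h hh hh'⟩
end
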